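/- Let G be an (l,r)-biregular Tanner graph with n variable nodes that is an (l,r,α,γ) left expander, and let 0 ≤ β ≤ 1 with β(l−1) ∈ ℕ and γ > β(l−1)/l. Let B and B' be sets of variable nodes with |B ∪ B'| ≤ αn such that: (a) every variable node in B'∖B has at least l−β(l−1) of its incident edges into N(B); and (b) |N(B)| ≤ l·|B∖B'| + ((l+β(l−1))/2)·|B∩B'|. Then |B'∖B| ≤ ((1−γ)/(γ−β(l−1)/l))·|B∖B'| + ((1+β(l−1)/l−2γ)/(2(γ−β(l−1)/l)))·|B∩B'|. -/

import Mathlib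

open Finset

/-
The expansion of `B ∪ B'` gives `|N(B ∪ B')| ≥ γ l |B ∪ B'|`. On the other hand, each node of
`B' \ B` has at most `b = β(l-1)` edges leaving `N(B)`, so `|N(B ∪ B')| ≤ |N(B)| + b |B' \ B|`,
and hypothesis (b) bounds `|N(B)|`. Writing `|B ∪ B'| = |B \ B'| + |B ∩ B'| + |B' \ B|`, the
two bounds give a linear inequality which, since `γ l - b > 0`, can be solved for `|B' \ B|`.
-/

/-- The set of check nodes adjacent to a set `V` of variable nodes in an
`(l,r)`-biregular Tanner graph, presented (configuration-model style) as a
bijection `σ` between variable-node sockets and check-node sockets. -/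
def nbhd {n m l r : ℕ} (σ : (Fin n × Fin l) ≃ (Fin m × Fin r))
    (V : Finset (Fin n)) : Finset (Fin m) :=
  (V ×ˢ (univ : Finset (Fin l))).image fun p => (σ p).1

/-- `σ` is an `(l,r,α,γ)` left expander: every set `V` of at most `α n`
variable nodes has at least `γ |V| l` check-node neighbours. -/
def IsLeftExpander {n m l r : ℕ} (σ : (Fin n × Fin l) ≃ (Fin m × Fin r))
    (α γ : ℝ) : Prop :=
  ∀ V : Finset (Fin n), (V.card : ℝ) ≤ α * n →
    γ * V.card * l ≤ ((nbhd σ V).card : ℝ)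

section Tanner

variable {n m l r : ℕ} (σ : (Fin n × Fin l) ≃ (Fin m × Fin r))

theorem nbhd_union (s t : Finset (Fin n)) : nbhd σ (s ∪ t) = nbhd σ s ∪ nbhd σ t := by
  rw [nbhd, union_product, image_union]; rfl

theorem card_nbhd_sdiff_le (C : Finset (Fin m)) (t : Finset (Fin n)) (b : ℕ)
    (h : ∀ v ∈ t, l - b ≤ #{i | (σ (v, i)).1 ∈ C}) :
    #(nbhd σ t \ C) ≤ b * #t := by
  calc #(nbhd σ t \ C) ≤ #{p ∈ t ×ˢ univ | (σ p).1 ∉ C} := by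
        rw [nbhd, sdiff_eq_filter, filter_image]; exact card_image_le
    _ = ∑ v ∈ t, #{i | (σ (v, i)).1 ∉ C} := by
        rw [card_filter, sum_product]; simp only [card_filter]
    _ ≤ ∑ _v ∈ t, b := sum_le_sum fun v hv => by
        have hsplit := card_filter_add_card_filter_not (s := (univ : Finset (Fin l)))
          (fun i => (σ (v, i)).1 ∈ C)
        rw [card_univ, Fintype.card_fin] at hsplit
        have := h v hv
        omega
    _ = b * #t := by rw [sum_const, smul_eq_mul, mul_comm]

theorem card_nbhd_union_le (s t : Finset (Fin n)) (b : ℕ)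
    (h : ∀ v ∈ t, l - b ≤ #{i | (σ (v, i)).1 ∈ nbhd σ s}) :
    #(nbhd σ (s ∪ t)) ≤ #(nbhd σ s) + b * #t := by
  rw [nbhd_union, ← union_sdiff_self_eq_union, card_union_of_disjoint disjoint_sdiff]
  exact Nat.add_le_add_left (card_nbhd_sdiff_le σ _ t b h) _

end Tanner

theorem Finset.card_union_eq_card_sdiff_add_card_inter_add_card_sdiff {α : Type*}
    [DecidableEq α] (s t : Finset α) : #(s ∪ t) = #(s \ t) + #(s ∩ t) + #(t \ s) := by
  rw [← union_sdiff_self_eq_union, card_union_of_disjoint disjoint_sdiff,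
    card_sdiff_add_card_inter]

theorem le_of_expansion_bound {γ b l x y z : ℝ} (hl : 0 < l) (hγ : b / l < γ)
    (h : γ * (x + y + z) * l ≤ l * x + (l + b) / 2 * y + b * z) :
    z ≤ (1 - γ) / (γ - b / l) * x + (1 + b / l - 2 * γ) / (2 * (γ - b / l)) * y := by
  have hd : 0 < γ - b / l := sub_pos.mpr hγ
  have hrhs : (1 - γ) / (γ - b / l) * x + (1 + b / l - 2 * γ) / (2 * (γ - b / l)) * y
      = ((1 - γ) * l * x + ((l + b) / 2 - γ * l) * y) / ((γ - b / l) * l) := by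
    field_simp
  have hdl : (γ - b / l) * l = γ * l - b := by field_simp
  rw [hrhs, le_div_iff₀ (mul_pos hd hl), hdl]
  linarith

theorem stmt5_general {n m l r : ℕ} (hl : 2 ≤ l)
    (σ : (Fin n × Fin l) ≃ (Fin m × Fin r))
    (α γ β : ℝ) (b : ℕ)
    (hb : (b : ℝ) = β * ((l : ℝ) - 1))
    (hγ : β * ((l : ℝ) - 1) / l < γ)
    (hexp : IsLeftExpander σ α γ)
    (B B' : Finset (Fin n))
    (hcard : ((B ∪ B').card : ℝ) ≤ α * n)
    (ha : ∀ v ∈ B' \ B,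
      l - b ≤ ((univ : Finset (Fin l)).filter
        (fun i => (σ (v, i)).1 ∈ nbhd σ B)).card)
    (hb2 : ((nbhd σ B).card : ℝ) ≤
      (l : ℝ) * ((B \ B').card : ℝ) +
        (((l : ℝ) + b) / 2) * ((B ∩ B').card : ℝ)) :
    ((B' \ B).card : ℝ) ≤
      ((1 - γ) / (γ - β * ((l : ℝ) - 1) / l)) * ((B \ B').card : ℝ) +
      ((1 + β * ((l : ℝ) - 1) / l - 2 * γ) /
          (2 * (γ - β * ((l : ℝ) - 1) / l))) * ((B ∩ B').card : ℝ) := by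
  have hlower := hexp (B ∪ B') hcard
  have hupper : (#(nbhd σ (B ∪ B')) : ℝ) ≤ #(nbhd σ B) + b * #(B' \ B) := by
    rw [← union_sdiff_self_eq_union]
    exact_mod_cast card_nbhd_union_le σ B (B' \ B) b ha
  rw [card_union_eq_card_sdiff_add_card_inter_add_card_sdiff] at hlower
  push_cast at hlower
  rw [← hb] at hγ ⊢
  exact le_of_expansion_bound (by positivity) hγ (by linarith)

/-- the one-step inequality relating the sizes of two "bad"
sets `B`, `B'` of variable nodes on a left expander. -/
theorem stmt5 {n m l r : ℕ} (hl : 2 ≤ l) (hr : 2 ≤ r)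
    (σ : (Fin n × Fin l) ≃ (Fin m × Fin r))
    (α γ β : ℝ) (b : ℕ)
    (hβ0 : 0 ≤ β) (hβ1 : β ≤ 1) (hb : (b : ℝ) = β * ((l : ℝ) - 1))
    (hγ : β * ((l : ℝ) - 1) / l < γ)
    (hexp : IsLeftExpander σ α γ)
    (B B' : Finset (Fin n))
    (hcard : ((B ∪ B').card : ℝ) ≤ α * n)
    (ha : ∀ v ∈ B' \ B,
      l - b ≤ ((univ : Finset (Fin l)).filter
        (fun i => (σ (v, i)).1 ∈ nbhd σ B)).card)
    (hb2 : ((nbhd σ B).card : ℝ) ≤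
      (l : ℝ) * ((B \ B').card : ℝ) +
        (((l : ℝ) + b) / 2) * ((B ∩ B').card : ℝ)) :
    ((B' \ B).card : ℝ) ≤
      ((1 - γ) / (γ - β * ((l : ℝ) - 1) / l)) * ((B \ B').card : ℝ) +
      ((1 + β * ((l : ℝ) - 1) / l - 2 * γ) /
          (2 * (γ - β * ((l : ℝ) - 1) / l))) * ((B ∩ B').card : ℝ) :=
  stmt5_general hl σ α γ β b hb hγ hexp B B' hcard ha hb2
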